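/- The group ⟨x, y | xy = yx, y² = 1⟩ is isomorphic to ℤ × ℤ/2, while the group ⟨x, y | xy⁻¹ = yx⁻¹⟩ is isomorphic to the free product ℤ * ℤ/2. In particular these two groups are not isomorphic. -/

import Mathlib

/-!
In `W₁` the generator `y` commutes with `x` and has order dividing `2`, so `(m, n) ↦ xᵐyⁿ` is a
homomorphism `ℤ × ℤ/2 → W₁`, inverse to `x ↦ (1, 0)`, `y ↦ (0, 1)`. In the core group the
relation `xy⁻¹ = yx⁻¹` says exactly that `z = xy⁻¹` satisfies `z² = 1`, and `y = zx`; so the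
presentation becomes `⟨x, z | z² = 1⟩ = ℤ ∗ ℤ/2`. The first group is abelian, the second
is not: sending `x, z` to the transpositions `(0 1), (1 2)` of `S₃` shows that `x` and `z` do not
commute.
-/

/-- Generators: `0 ↦ x`, `1 ↦ y`.  Relations: `xy = yx` and `y² = 1`. -/
def hopfW1Rels : Set (FreeGroup (Fin 2)) :=
  { FreeGroup.of 0 * FreeGroup.of 1 * (FreeGroup.of 1 * FreeGroup.of 0)⁻¹,
    (FreeGroup.of 1) ^ 2 }

/-- Generators: `0 ↦ x`, `1 ↦ y`.  Relation: `xy⁻¹ = yx⁻¹`. -/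
def hopfCoreRels : Set (FreeGroup (Fin 2)) :=
  { FreeGroup.of 0 * (FreeGroup.of 1)⁻¹ * (FreeGroup.of 1 * (FreeGroup.of 0)⁻¹)⁻¹ }

open Multiplicative Monoid Monoid.Coprod

section ZModPowers

variable {G : Type*} [Group G]

noncomputable def zmodPowersHom (n : ℕ) (g : G) (hg : g ^ n = 1) : Multiplicative (ZMod n) →* G :=
  AddMonoidHom.toMultiplicativeLeft <|
    ZMod.lift n ⟨zmultiplesHom (Additive G) (Additive.ofMul g), by
      simp [← ofMul_pow, hg]⟩

theorem zmodPowersHom_ofAdd_intCast (n : ℕ) (g : G) (hg : g ^ n = 1) (k : ℤ) :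
    zmodPowersHom n g hg (ofAdd (k : ZMod n)) = g ^ k := by
  rw [zmodPowersHom, AddMonoidHom.toMultiplicativeLeft_apply_apply, toAdd_ofAdd, ZMod.lift_coe]
  simp

@[simp]
theorem zmodPowersHom_ofAdd_one (n : ℕ) (g : G) (hg : g ^ n = 1) :
    zmodPowersHom n g hg (ofAdd 1) = g := by
  simpa using zmodPowersHom_ofAdd_intCast n g hg 1

theorem Commute.zpowersHom_zmodPowersHom {a g : G} (h : Commute a g) {n : ℕ} (hg : g ^ n = 1)
    (m : Multiplicative ℤ) (x : Multiplicative (ZMod n)) :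
    Commute (zpowersHom G a m) (zmodPowersHom n g hg x) := by
  obtain ⟨k, hk⟩ := ZMod.intCast_surjective x.toAdd
  rw [← ofAdd_toAdd x, ← hk, zmodPowersHom_ofAdd_intCast, zpowersHom_apply]
  exact h.zpow_zpow _ k

theorem MonoidHom.ext_mzmod {n : ℕ} {M : Type*} [Monoid M] {φ ψ : Multiplicative (ZMod n) →* M}
    (h : φ (ofAdd 1) = ψ (ofAdd 1)) : φ = ψ := by
  have hcast : Function.Surjective (AddMonoidHom.toMultiplicative (Int.castAddHom (ZMod n))) :=
    ZMod.intCast_surjective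
  exact (MonoidHom.cancel_right hcast).1 (MonoidHom.ext_mint (by simpa using h))

end ZModPowers

theorem MonoidHom.prod_ext {M N P : Type*} [Monoid M] [Monoid N] [Monoid P] {φ ψ : M × N →* P}
    (h₁ : φ.comp (inl M N) = ψ.comp (inl M N)) (h₂ : φ.comp (inr M N) = ψ.comp (inr M N)) :
    φ = ψ := by
  rw [← noncommCoprod_unique φ, ← noncommCoprod_unique ψ]
  simp only [h₁, h₂]

theorem hopfW1_commute_of : Commute (.of 0 : PresentedGroup hopfW1Rels) (.of 1) := by
  have h := PresentedGroup.mk_eq_mk_of_mul_inv_mem (Set.mem_insert _ _ : _ ∈ hopfW1Rels)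
  rwa [map_mul, map_mul] at h

theorem hopfW1_of_one_sq : (.of 1 : PresentedGroup hopfW1Rels) ^ 2 = 1 := by
  have h := PresentedGroup.one_of_mem (Set.mem_insert_of_mem _ rfl : _ ∈ hopfW1Rels)
  rwa [map_pow] at h

theorem hopfW1Rels_lift_prod :
    ∀ r ∈ hopfW1Rels,
      FreeGroup.lift ![(ofAdd 1, 1), (1, ofAdd 1)] r =
        (1 : Multiplicative ℤ × Multiplicative (ZMod 2)) := by
  rintro r (rfl | rfl)
  · simp [mul_comm]
  · simp only [map_pow, FreeGroup.lift_apply_of]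
    decide

noncomputable def prodToHopfW1 :
    Multiplicative ℤ × Multiplicative (ZMod 2) →* PresentedGroup hopfW1Rels :=
  (zpowersHom _ (.of 0 : PresentedGroup hopfW1Rels)).noncommCoprod
    (zmodPowersHom 2 (.of 1) hopfW1_of_one_sq)
    (hopfW1_commute_of.zpowersHom_zmodPowersHom hopfW1_of_one_sq)

noncomputable def hopfW1EquivProd :
    PresentedGroup hopfW1Rels ≃* Multiplicative ℤ × Multiplicative (ZMod 2) :=
  MonoidHom.toMulEquiv (PresentedGroup.toGroup hopfW1Rels_lift_prod) prodToHopfW1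
    (PresentedGroup.ext fun i => by fin_cases i <;> simp [prodToHopfW1])
    (MonoidHom.prod_ext (MonoidHom.ext_mint (by simp [prodToHopfW1]))
      (MonoidHom.ext_mzmod (by simp [prodToHopfW1])))

@[simp]
theorem Monoid.Coprod.inr_ofAdd_one_inv {M : Type*} [Group M] :
    (inr (ofAdd 1) : M ∗ Multiplicative (ZMod 2))⁻¹ = inr (ofAdd 1) := by
  rw [← map_inv]
  rfl

theorem hopfCore_mul_inv_eq :
    (.of 0 * (.of 1)⁻¹ : PresentedGroup hopfCoreRels) = .of 1 * (.of 0)⁻¹ := by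
  have h := PresentedGroup.mk_eq_mk_of_mul_inv_mem (Set.mem_singleton _ : _ ∈ hopfCoreRels)
  rwa [map_mul, map_mul, map_inv, map_inv] at h

theorem hopfCore_mul_inv_sq : (.of 0 * (.of 1)⁻¹ : PresentedGroup hopfCoreRels) ^ 2 = 1 := by
  rw [sq]
  nth_rewrite 2 [hopfCore_mul_inv_eq]
  group

theorem hopfCore_mul_inv_mul :
    (.of 0 * (.of 1)⁻¹ : PresentedGroup hopfCoreRels) * .of 0 = .of 1 := by
  rw [hopfCore_mul_inv_eq]
  group

theorem hopfCoreRels_lift_coprod :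
    ∀ r ∈ hopfCoreRels,
      FreeGroup.lift ![inl (ofAdd 1), inr (ofAdd 1) * inl (ofAdd 1)] r =
        (1 : Multiplicative ℤ ∗ Multiplicative (ZMod 2)) := by
  rintro r rfl
  rw [map_mul, map_inv, mul_inv_eq_one]
  simp

noncomputable def coprodToHopfCore :
    Multiplicative ℤ ∗ Multiplicative (ZMod 2) →* PresentedGroup hopfCoreRels :=
  lift (zpowersHom _ (.of 0 : PresentedGroup hopfCoreRels)) (zmodPowersHom 2 _ hopfCore_mul_inv_sq)

noncomputable def hopfCoreEquivCoprod :
    PresentedGroup hopfCoreRels ≃* Multiplicative ℤ ∗ Multiplicative (ZMod 2) :=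
  MonoidHom.toMulEquiv (PresentedGroup.toGroup hopfCoreRels_lift_coprod) coprodToHopfCore
    (PresentedGroup.ext fun i => by fin_cases i <;> simp [coprodToHopfCore, hopfCore_mul_inv_mul])
    (hom_ext (MonoidHom.ext_mint (by simp [coprodToHopfCore]))
      (MonoidHom.ext_mzmod (by simp [coprodToHopfCore])))

theorem Monoid.Coprod.not_commute_inl_inr_ofAdd_one :
    ¬ Commute (inl (ofAdd 1) : Multiplicative ℤ ∗ Multiplicative (ZMod 2)) (inr (ofAdd 1)) := by
  intro h
  have h₃ := h.map <| lift (zpowersHom _ (Equiv.swap (0 : Fin 3) 1))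
    (zmodPowersHom 2 (Equiv.swap (1 : Fin 3) 2) (by decide))
  simp only [lift_apply_inl, lift_apply_inr, zpowersHom_apply, toAdd_ofAdd, zpow_one,
    zmodPowersHom_ofAdd_one] at h₃
  exact absurd h₃.eq (by decide)

/-- `⟨x, y | xy = yx, y² = 1⟩ ≅ ℤ × ℤ/2` while `⟨x, y | xy⁻¹ = yx⁻¹⟩ ≅ ℤ * ℤ/2`
(free product); in particular the two presented groups are not isomorphic. -/
theorem stmt_11 :
    Nonempty (PresentedGroup hopfW1Rels ≃* (Multiplicative ℤ × Multiplicative (ZMod 2))) ∧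
    Nonempty (PresentedGroup hopfCoreRels ≃*
      Monoid.Coprod (Multiplicative ℤ) (Multiplicative (ZMod 2))) ∧
    IsEmpty (PresentedGroup hopfW1Rels ≃* PresentedGroup hopfCoreRels) := by
  refine ⟨⟨hopfW1EquivProd⟩, ⟨hopfCoreEquivCoprod⟩, ⟨fun e => ?_⟩⟩
  let c := hopfW1EquivProd.symm.trans (e.trans hopfCoreEquivCoprod)
  apply Monoid.Coprod.not_commute_inl_inr_ofAdd_one
  rw [← c.apply_symm_apply (inl _), ← c.apply_symm_apply (inr _)]
  exact (Commute.all _ _).map c
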